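/- Let φ : ℂ → ℂ be entire, let a, b, c, d, e ∈ ℂ, and let α(x) = a + bx + cx² + dx³ + ex⁴. Then the coefficient E_{5,3}(α,φ) of y³ in X_h⁵α vanishes identically on ℂ if and only if φ satisfies the linear fourth-order ODE (L): (4ex³ + 3dx² + 2cx + b)·φ⁗ + (60ex² + 30dx + 10c)·φ''' + (240ex + 60d)·φ'' + 240e·φ' = 0 at every x ∈ ℂ. -/

import Mathlib

/-!
The coefficients vanish above the diagonal, the diagonal is `E_{n,n} = α⁽ⁿ⁾`, and by induction
with Pascal's rule the first subdiagonal is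
`E_{n+2,n} = -∑_{j=0}^{n} C(n+2, j+2) α⁽ⁿ⁺¹⁻ʲ⁾ φ⁽ʲ⁺¹⁾`.
For `n = 3` and `α` quartic this is exactly minus the left-hand side of (L).
-/

open Finset

theorem Differentiable.hasDerivAt_iteratedDeriv {F : Type*} [NormedAddCommGroup F]
    [NormedSpace ℂ F] [CompleteSpace F] {f : ℂ → F} (hf : Differentiable ℂ f) (k : ℕ) (x : ℂ) :
    HasDerivAt (iteratedDeriv k f) (iteratedDeriv (k + 1) f x) x := by
  rw [iteratedDeriv_succ]
  exact (hf.contDiff.differentiable_iteratedDeriv k (WithTop.coe_lt_top _) x).hasDerivAt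

/-- Pascal's rule, in the shape produced by differentiating the subdiagonal formula. -/
theorem sum_range_choose_mul_succ {R : Type*} [CommSemiring R] (n : ℕ) (A B : ℕ → R) :
    ∑ j ∈ range (n + 1), ((n + 2).choose (j + 2) : R) *
        (A (n + 2 - j) * B (j + 1) + A (n + 1 - j) * B (j + 2)) + (n + 2) * A (n + 2) * B 1 =
      ∑ j ∈ range (n + 2), ((n + 3).choose (j + 2) : R) * A (n + 2 - j) * B (j + 1) := by
  have hsub (j : ℕ) : n + 2 - (j + 1) = n + 1 - j := by omega
  simp only [Nat.choose_succ_succ' (n + 2), Nat.cast_add, add_mul, sum_add_distrib]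
  rw [sum_range_succ' (fun j => ((n + 2).choose (j + 1) : R) * _ * _), sum_range_succ _ (n + 1)]
  simp only [mul_add, sum_add_distrib, Nat.choose_succ_self, Nat.choose_one_right, Nat.cast_zero,
    zero_mul, add_zero, Nat.cast_add, Nat.cast_ofNat, mul_assoc, add_assoc, Nat.reduceAdd, hsub, Nat.sub_zero]
  ring

open Polynomial in
theorem Polynomial.iteratedDeriv_eval {𝕜 : Type*} [NontriviallyNormedField 𝕜] (p : 𝕜[X]) (k : ℕ) :
    iteratedDeriv k (fun x => p.eval x) = fun x => (derivative^[k] p).eval x := by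
  induction k with
  | zero => simp
  | succ k ih => ext x; rw [iteratedDeriv_succ, ih, Function.iterate_succ_apply', Polynomial.deriv]

/-- `E n k` is the coefficient `E_{n,k}(α, φ)` of `yᵏ` in `X_hⁿ α`. -/
structure IsLieDerivCoeff (φ α : ℂ → ℂ) (E : ℕ → ℤ → ℂ → ℂ) : Prop where
  one_one : ∀ x, E 1 1 x = deriv α x
  one_of_ne : ∀ k : ℤ, k ≠ 1 → ∀ x, E 1 k x = 0
  succ : ∀ n : ℕ, 1 ≤ n → ∀ (k : ℤ) (x : ℂ),
    E (n + 1) k x = deriv (E n (k - 1)) x - ((k : ℂ) + 1) * E n (k + 1) x * deriv φ x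

namespace IsLieDerivCoeff

variable {φ α : ℂ → ℂ} {E : ℕ → ℤ → ℂ → ℂ}

theorem eq_zero_of_lt (h : IsLieDerivCoeff φ α E) {n : ℕ} (hn : 1 ≤ n) {k : ℤ} (hk : n < k) :
    E n k = 0 := by
  induction n, hn using Nat.le_induction generalizing k with
  | base => exact funext (h.one_of_ne k (by omega))
  | succ n hn ih =>
    ext x
    push_cast at hk
    rw [h.succ n hn, ih (by omega), ih (by omega)]
    simp

theorem diag_eq (h : IsLieDerivCoeff φ α E) {n : ℕ} (hn : 1 ≤ n) : E n n = iteratedDeriv n α := by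
  induction n, hn using Nat.le_induction with
  | base => exact funext fun x => by simpa using h.one_one x
  | succ n hn ih =>
    ext x
    rw [h.succ n hn, Nat.cast_succ, add_sub_cancel_right, ih, h.eq_zero_of_lt hn (by omega),
      iteratedDeriv_succ]
    simp

theorem subdiag_eq (h : IsLieDerivCoeff φ α E) (hα : Differentiable ℂ α) (hφ : Differentiable ℂ φ)
    (n : ℕ) :
    E (n + 2) n = fun x => -∑ j ∈ range (n + 1),
      ((n + 2).choose (j + 2) : ℂ) * iteratedDeriv (n + 1 - j) α x * iteratedDeriv (j + 1) φ x := by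
  induction n with
  | zero =>
    ext x
    rw [h.succ 1 le_rfl, _root_.funext (h.one_of_ne _ (by decide))]
    simp [h.one_one]
  | succ n ih =>
    ext x
    have hrec := h.succ (n + 2) (by omega) (n + 1) x
    rw [add_sub_cancel_right, ih, show (n : ℤ) + 1 + 1 = ((n + 2 : ℕ) : ℤ) by push_cast; ring,
      h.diag_eq (by omega)] at hrec
    rw [show n + 1 + 2 = n + 2 + 1 by ring, Nat.cast_succ, hrec]
    have hderiv : HasDerivAt (fun y => -∑ j ∈ range (n + 1),
        ((n + 2).choose (j + 2) : ℂ) * iteratedDeriv (n + 1 - j) α y * iteratedDeriv (j + 1) φ y)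
        (-∑ j ∈ range (n + 1), ((n + 2).choose (j + 2) : ℂ) *
          (iteratedDeriv (n + 2 - j) α x * iteratedDeriv (j + 1) φ x +
            iteratedDeriv (n + 1 - j) α x * iteratedDeriv (j + 2) φ x)) x := by
      refine (HasDerivAt.fun_sum fun j hj => ?_).neg
      rw [mem_range] at hj
      rw [show n + 2 - j = n + 1 - j + 1 by omega]
      exact (((hα.hasDerivAt_iteratedDeriv (n + 1 - j) x).const_mul _).mul
        (hφ.hasDerivAt_iteratedDeriv (j + 1) x)).congr_deriv (by ring)
    have hpascal := sum_range_choose_mul_succ n (iteratedDeriv · α x) (iteratedDeriv · φ x)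
    rw [hderiv.deriv, ← iteratedDeriv_one]
    push_cast
    linear_combination -hpascal

end IsLieDerivCoeff

/-- Let `φ : ℂ → ℂ` be entire and `α(x) = a + bx + cx² + dx³ + ex⁴`.
With `E n k` defined by the usual recurrence, the coefficient `E 5 3` of `y³` in
`X_h⁵α` vanishes identically iff `φ` satisfies the linear fourth-order ODE (L):
`(4ex³+3dx²+2cx+b)φ⁗ + (60ex²+30dx+10c)φ''' + (240ex+60d)φ'' + 240eφ' = 0`. -/
theorem statement7
    (φ : ℂ → ℂ) (hφ : Differentiable ℂ φ)
    (a b c d e : ℂ)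
    (α : ℂ → ℂ)
    (hα : ∀ x : ℂ, α x = a + b * x + c * x ^ 2 + d * x ^ 3 + e * x ^ 4)
    (E : ℕ → ℤ → ℂ → ℂ)
    (hE11 : ∀ x : ℂ, E 1 1 x = deriv α x)
    (hE1k : ∀ k : ℤ, k ≠ 1 → ∀ x : ℂ, E 1 k x = 0)
    (hErec : ∀ n : ℕ, 1 ≤ n → ∀ (k : ℤ) (x : ℂ),
      E (n + 1) k x = deriv (E n (k - 1)) x - ((k : ℂ) + 1) * E n (k + 1) x * deriv φ x) :
    (∀ x : ℂ, E 5 3 x = 0) ↔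
      ∀ x : ℂ,
        (4 * e * x ^ 3 + 3 * d * x ^ 2 + 2 * c * x + b) * iteratedDeriv 4 φ x
          + (60 * e * x ^ 2 + 30 * d * x + 10 * c) * iteratedDeriv 3 φ x
          + (240 * e * x + 60 * d) * iteratedDeriv 2 φ x
          + 240 * e * deriv φ x = 0 := by
  have hE : IsLieDerivCoeff φ α E := ⟨hE11, hE1k, hErec⟩
  open Polynomial in
  have hα_eval : α = fun x => (C a + C b * X + C c * X ^ 2 + C d * X ^ 3 + C e * X ^ 4).eval x :=
    funext fun x => by simp [hα]
  have hα_diff : Differentiable ℂ α := hα_eval ▸ Polynomial.differentiable _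
  have hE53 (x : ℂ) : E 5 3 x =
      -((4 * e * x ^ 3 + 3 * d * x ^ 2 + 2 * c * x + b) * iteratedDeriv 4 φ x
        + (60 * e * x ^ 2 + 30 * d * x + 10 * c) * iteratedDeriv 3 φ x
        + (240 * e * x + 60 * d) * iteratedDeriv 2 φ x
        + 240 * e * deriv φ x) := by
    have h53 := congrFun (hE.subdiag_eq hα_diff hφ 3) x
    simp only [hα_eval, Polynomial.iteratedDeriv_eval] at h53
    norm_num [sum_range_succ, Function.iterate_succ_apply', Nat.choose] at h53
    rw [h53]
    ring
  simp only [hE53, neg_eq_zero]
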